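/- Let λ ∈ ℂ with λ ≠ 0 and |λ| ≠ 1, and let A be the 2n×2n block diagonal matrix diag(J(λ,n), J(conj(λ)⁻¹, n)). Then there exists C ∈ GL(2n, ℂ) with C * conj(C) = I and C A C⁻¹ = (conj A)⁻¹. -/

import Mathlib

open Matrix

/-- The `n × n` Jordan block with eigenvalue `λ`. -/
def jordanBlock (lam : ℂ) (n : ℕ) : Matrix (Fin n) (Fin n) ℂ :=
  Matrix.of fun i j => if (j : ℕ) = i then lam else if (j : ℕ) = i + 1 then 1 else 0

/-!
For any invertible `B`, the block anti-diagonal matrix `C = [[0, B], [conj(B)⁻¹, 0]]` satisfies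
`C * conj C = 1`, and `C A C⁻¹ = (conj A)⁻¹` for `A = diag(P, Q)` as soon as
`conj(P) * B * Q = B`; the lower block of that identity is the conjugate of the upper one.
With `t = conj λ` we need `J(t) * B * J(t⁻¹) = B`, and the signed Pascal matrix
`B i j = (-1)^j * C(j, i) * t^(i + j)` does it: writing `J(t) = t + N` with `N` the shift,
the identity reduces entrywise to Pascal's rule. `B` is upper triangular with diagonal entries
`(-1)^i * t^(2 i)`, hence invertible when `λ ≠ 0`.
-/

section StarAntidiag

variable {R ι : Type*} [CommRing R] [Fintype ι] [DecidableEq ι]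

lemma mul_inv_mul_eq_inv_of_mul_mul_eq {P Q Y : Matrix ι ι R} (hY : IsUnit Y)
    (h : P * Y * Q = Y) : Q * Y⁻¹ * P = Y⁻¹ := by
  have hY₁ : Y⁻¹ * Y = 1 := Y.nonsing_inv_mul ((isUnit_iff_isUnit_det Y).mp hY)
  have hY₂ : Y * Y⁻¹ = 1 := mul_eq_one_comm.mp hY₁
  have hQ : Q * (Y⁻¹ * P * Y) = 1 := mul_eq_one_comm.mp <| by
    rw [Matrix.mul_assoc, Matrix.mul_assoc, ← Matrix.mul_assoc P, h, hY₁]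
  calc Q * Y⁻¹ * P = Q * (Y⁻¹ * P * Y) * Y⁻¹ := by
        simp only [Matrix.mul_assoc, hY₂, Matrix.mul_one]
    _ = Y⁻¹ := by rw [hQ, Matrix.one_mul]

variable [StarRing R]

lemma map_starRingEnd_map_starRingEnd {m n : Type*} (M : Matrix m n R) :
    (M.map (starRingEnd R)).map (starRingEnd R) = M :=
  Matrix.map_involutive (starRingEnd_self_apply (R := R)) M

noncomputable def starAntidiag (B : Matrix ι ι R) : Matrix (ι ⊕ ι) (ι ⊕ ι) R :=
  fromBlocks 0 B (B.map (starRingEnd R))⁻¹ 0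

variable {B : Matrix ι ι R}

lemma starAntidiag_mul_map_starRingEnd (hB : IsUnit B) :
    starAntidiag B * (starAntidiag B).map (starRingEnd R) = 1 := by
  have hB' : IsUnit (B.map (starRingEnd R)) := hB.map (starRingEnd R).mapMatrix
  have h₁ : (B.map (starRingEnd R))⁻¹ * B.map (starRingEnd R) = 1 :=
    nonsing_inv_mul _ ((isUnit_iff_isUnit_det _).mp hB')
  have h₂ : B * (B.map (starRingEnd R))⁻¹.map (starRingEnd R) = 1 := by
    refine mul_eq_one_comm.mp ?_
    simpa only [Matrix.map_mul, map_starRingEnd_map_starRingEnd,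
      Matrix.map_one _ (map_zero _) (map_one _)] using congrArg (Matrix.map · (starRingEnd R)) h₁
  simp only [starAntidiag, fromBlocks_map, fromBlocks_multiply, Matrix.map_zero _ (map_zero _),
    Matrix.zero_mul, Matrix.mul_zero, zero_add, add_zero, h₁, h₂, fromBlocks_one]

lemma isUnit_starAntidiag (hB : IsUnit B) : IsUnit (starAntidiag B) :=
  IsUnit.of_mul_eq_one _ (starAntidiag_mul_map_starRingEnd hB)

lemma starAntidiag_mul_fromBlocks_mul_inv {P Q : Matrix ι ι R} (hB : IsUnit B)
    (h : P.map (starRingEnd R) * B * Q = B) :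
    starAntidiag B * fromBlocks P 0 0 Q * (starAntidiag B)⁻¹ =
      ((fromBlocks P 0 0 Q).map (starRingEnd R))⁻¹ := by
  have hC := starAntidiag_mul_map_starRingEnd hB
  have h' : Q.map (starRingEnd R) * (B.map (starRingEnd R))⁻¹ * P =
      (B.map (starRingEnd R))⁻¹ := by
    refine mul_inv_mul_eq_inv_of_mul_mul_eq (hB.map (starRingEnd R).mapMatrix) ?_
    simpa only [Matrix.map_mul, map_starRingEnd_map_starRingEnd]
      using congrArg (Matrix.map · (starRingEnd R)) h
  have hA : (fromBlocks P 0 0 Q).map (starRingEnd R) * starAntidiag B * fromBlocks P 0 0 Q =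
      starAntidiag B := by
    simp only [starAntidiag, fromBlocks_map, fromBlocks_multiply, Matrix.map_zero _ (map_zero _),
      Matrix.zero_mul, Matrix.mul_zero, zero_add, add_zero, h, h']
  rw [inv_eq_right_inv hC]
  refine (inv_eq_right_inv ?_).symm
  rw [← Matrix.mul_assoc, ← Matrix.mul_assoc, hA, hC]

end StarAntidiag

section JordanBlock

variable {n : ℕ}

lemma jordanBlock_apply_eq_add (a : ℂ) (i j : Fin n) :
    jordanBlock a n i j = (if j = i then a else 0) + if (j : ℕ) = i + 1 then 1 else 0 := by
  by_cases h : j = i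
  · simp [jordanBlock, h]
  · simp [jordanBlock, h, Fin.val_eq_val]

lemma jordanBlock_mul_apply (a : ℂ) (M : Matrix (Fin n) (Fin n) ℂ) (i j : Fin n) :
    (jordanBlock a n * M) i j =
      a * M i j + if h : (i : ℕ) + 1 < n then M ⟨i + 1, h⟩ j else 0 := by
  simp only [mul_apply, jordanBlock_apply_eq_add, add_mul, Finset.sum_add_distrib, ite_mul,
    zero_mul, one_mul, Finset.sum_ite_eq', Finset.mem_univ, if_true]
  congr 1
  split_ifs with h
  · rw [Finset.sum_eq_single ⟨i + 1, h⟩ (fun k _ hk => if_neg fun e => hk (Fin.ext e))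
      (by simp)]
    exact if_pos rfl
  · exact Finset.sum_eq_zero fun k _ => if_neg (by omega)

lemma mul_jordanBlock_apply (a : ℂ) (M : Matrix (Fin n) (Fin n) ℂ) (i j : Fin n) :
    (M * jordanBlock a n) i j =
      a * M i j + if h : (j : ℕ) = 0 then 0 else M i ⟨j - 1, by omega⟩ := by
  simp only [mul_apply, jordanBlock_apply_eq_add, mul_add, Finset.sum_add_distrib, mul_ite,
    mul_zero, mul_one, Finset.sum_ite_eq, Finset.mem_univ, if_true]
  rw [mul_comm]
  congr 1
  split_ifs with h
  · exact Finset.sum_eq_zero fun k _ => if_neg (by omega)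
  · rw [Finset.sum_eq_single ⟨j - 1, by omega⟩
      (fun k _ hk => if_neg fun e => hk (Fin.ext (by simp only; omega))) (by simp)]
    exact if_pos (by simp only; omega)

lemma jordanBlock_map_starRingEnd (a : ℂ) (n : ℕ) :
    (jordanBlock a n).map (starRingEnd ℂ) = jordanBlock (starRingEnd ℂ a) n := by
  ext i j
  simp only [jordanBlock, map_apply, of_apply, apply_ite (starRingEnd ℂ), map_one, map_zero]

def signedPascalCoeff (t : ℂ) (i j : ℕ) : ℂ :=
  (-1) ^ j * (j.choose i : ℂ) * t ^ (i + j)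

def signedPascal (t : ℂ) (n : ℕ) : Matrix (Fin n) (Fin n) ℂ :=
  of fun i j => signedPascalCoeff t i j

@[simp]
lemma signedPascal_apply (t : ℂ) (i j : Fin n) : signedPascal t n i j = signedPascalCoeff t i j :=
  rfl

lemma signedPascalCoeff_of_lt (t : ℂ) {i j : ℕ} (h : j < i) : signedPascalCoeff t i j = 0 := by
  simp [signedPascalCoeff, Nat.choose_eq_zero_of_lt h]

lemma signedPascalCoeff_succ_succ (t : ℂ) (i j : ℕ) :
    signedPascalCoeff t (i + 1) (j + 1) =
      -t * (t * signedPascalCoeff t i j + signedPascalCoeff t (i + 1) j) := by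
  simp only [signedPascalCoeff, Nat.choose_succ_succ, Nat.cast_add]
  ring

lemma jordanBlock_mul_signedPascal_apply (a t : ℂ) (i j : Fin n) :
    (jordanBlock a n * signedPascal t n) i j =
      a * signedPascalCoeff t i j + signedPascalCoeff t (i + 1) j := by
  rw [jordanBlock_mul_apply]
  split_ifs with h
  · rfl
  · rw [signedPascalCoeff_of_lt t (i := i + 1) (by omega), add_zero, add_zero, signedPascal_apply]

lemma jordanBlock_mul_signedPascal_mul_jordanBlock_inv {t : ℂ} (ht : t ≠ 0) (n : ℕ) :
    jordanBlock t n * signedPascal t n * jordanBlock t⁻¹ n = signedPascal t n := by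
  ext i j
  rw [mul_jordanBlock_apply, jordanBlock_mul_signedPascal_apply, signedPascal_apply]
  split_ifs with hj
  · rw [hj, signedPascalCoeff_of_lt t (Nat.succ_pos _)]
    field_simp
    ring
  · obtain ⟨k, hk⟩ : ∃ k, (j : ℕ) = k + 1 := ⟨j - 1, by omega⟩
    rw [jordanBlock_mul_signedPascal_apply]
    simp only [hk, Nat.add_sub_cancel, signedPascalCoeff_succ_succ]
    field_simp
    ring

lemma isUnit_signedPascal {t : ℂ} (ht : t ≠ 0) (n : ℕ) : IsUnit (signedPascal t n) := by
  have hupper : (signedPascal t n).IsUpperTriangular := fun i j hji =>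
    signedPascalCoeff_of_lt t hji
  rw [isUnit_iff_isUnit_det, det_of_isUpperTriangular hupper, isUnit_iff_ne_zero]
  exact Finset.prod_ne_zero_iff.mpr fun i _ => by simp [signedPascalCoeff, ht]

end JordanBlock

theorem jordan_pair_strongly_c_reversible_general (n : ℕ) (lam : ℂ)
    (h0 : lam ≠ 0) :
    ∃ C : Matrix (Fin n ⊕ Fin n) (Fin n ⊕ Fin n) ℂ, IsUnit C ∧
      C * C.map (starRingEnd ℂ) = 1 ∧
      C * (Matrix.fromBlocks (jordanBlock lam n) 0 0
            (jordanBlock ((starRingEnd ℂ lam)⁻¹) n)) * C⁻¹ =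
        ((Matrix.fromBlocks (jordanBlock lam n) 0 0
            (jordanBlock ((starRingEnd ℂ lam)⁻¹) n)).map (starRingEnd ℂ))⁻¹ := by
  have hconj : starRingEnd ℂ lam ≠ 0 := (map_ne_zero _).mpr h0
  have hB := isUnit_signedPascal hconj n
  refine ⟨starAntidiag (signedPascal (starRingEnd ℂ lam) n), isUnit_starAntidiag hB,
    starAntidiag_mul_map_starRingEnd hB, starAntidiag_mul_fromBlocks_mul_inv hB ?_⟩
  rw [jordanBlock_map_starRingEnd]
  exact jordanBlock_mul_signedPascal_mul_jordanBlock_inv hconj n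

/-- For `λ ≠ 0` with `|λ| ≠ 1`, the block diagonal matrix
`A = diag(J(λ,n), J(conj(λ)⁻¹, n))` admits `C` with `C * conj C = I` and
`C A C⁻¹ = (conj A)⁻¹`. -/
theorem jordan_pair_strongly_c_reversible (n : ℕ) (lam : ℂ)
    (h0 : lam ≠ 0) (h1 : ‖lam‖ ≠ 1) :
    ∃ C : Matrix (Fin n ⊕ Fin n) (Fin n ⊕ Fin n) ℂ, IsUnit C ∧
      C * C.map (starRingEnd ℂ) = 1 ∧
      C * (Matrix.fromBlocks (jordanBlock lam n) 0 0
            (jordanBlock ((starRingEnd ℂ lam)⁻¹) n)) * C⁻¹ =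
        ((Matrix.fromBlocks (jordanBlock lam n) 0 0
            (jordanBlock ((starRingEnd ℂ lam)⁻¹) n)).map (starRingEnd ℂ))⁻¹ :=
  jordan_pair_strongly_c_reversible_general n lam h0
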